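/- Let d be a positive integer and N = (N_1, …, N_d) with each N_i an integer greater than 1. Let M_N := {MAP_N(a, b) : a, b ∈ ℤ^d} be the set system of all maximal arithmetic progressions in Ω_N. Then there is a constant C_d depending only on d such that γ₂(M_N) ≤ C_d · f(N). -/

import Mathlib

open scoped Pointwise BigOperators

noncomputable section

/-- The set system discrepancy: minimum over ±1 colorings of the maximum
imbalance of a set in the system. -/
def discSys {α : Type*} (𝒮 : Set (Set α)) : ℝ :=
  ⨅ χ : α → Bool, ⨆ S ∈ 𝒮, |∑ᶠ x ∈ S, (if χ x then (1 : ℝ) else -1)|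

/-- The arithmetic progression AP_d(a, b, ℓ) = {a + i b : 0 ≤ i < ℓ}. -/
def APset {d : ℕ} (a b : Fin d → ℤ) (ℓ : ℕ) : Set (Fin d → ℤ) :=
  { z | ∃ i : ℕ, i < ℓ ∧ z = a + (i : ℤ) • b }

/-- The grid [N₁] × ⋯ × [N_d]. -/
def OmegaN {d : ℕ} (N : Fin d → ℤ) : Set (Fin d → ℤ) :=
  { x | ∀ i, 1 ≤ x i ∧ x i ≤ N i }

/-- The family of arithmetic progressions restricted to the universe Ω. -/
def APsys {d : ℕ} (Ω : Set (Fin d → ℤ)) : Set (Set (Fin d → ℤ)) :=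
  { S | ∃ (a b : Fin d → ℤ) (ℓ : ℕ), 0 < ℓ ∧ S = Ω ∩ APset a b ℓ }

/-- f(N) = max over I ⊆ [d] of (∏_{i ∈ I} N_i)^(1/(2|I|+2)). -/
def fVec {d : ℕ} (N : Fin d → ℤ) : ℝ :=
  ⨆ I : Finset (Fin d), (∏ i ∈ I, (N i : ℝ)) ^ ((1 : ℝ) / (2 * (I.card : ℝ) + 2))

/-- A convex body: compact, convex, with nonempty interior. -/
def IsConvexBody {d : ℕ} (K : Set (Fin d → ℝ)) : Prop :=
  Convex ℝ K ∧ IsCompact K ∧ (interior K).Nonempty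

/-- The integer points in a subset of ℝ^d. -/
def intPoints {d : ℕ} (A : Set (Fin d → ℝ)) : Set (Fin d → ℤ) :=
  { x | (fun i => (x i : ℝ)) ∈ A }

/-- ζ_A(t) = number of integer points in t·A. -/
def zetaSet {d : ℕ} (A : Set (Fin d → ℝ)) (t : ℝ) : ℕ :=
  (intPoints (t • A)).ncard

/-- f(K) = √(s*) where s* = inf {s > 0 : ζ_{K−K}(1/s) ≤ s}. -/
def fBody {d : ℕ} (K : Set (Fin d → ℝ)) : ℝ :=
  Real.sqrt (sInf { s : ℝ | 0 < s ∧ (zetaSet (K - K) (1 / s) : ℝ) ≤ s })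

/-- γ₂ of the 0/1 incidence matrix of the set system 𝒮 with columns indexed by the
universe Ω: the infimum over factorizations of the product of the max row norm of the
left factor and max column norm of the right factor. -/
def gamma2S {α : Type*} (Ω : Set α) (𝒮 : Set (Set α)) : ℝ :=
  sInf { c : ℝ | ∃ (k : ℕ) (L : 𝒮 → Fin k → ℝ) (R : Fin k → Ω → ℝ),
    (∀ (S : 𝒮) (x : Ω), (∑ t, L S t * R t x) =
        Set.indicator (S : Set α) (fun _ => (1 : ℝ)) (x : α)) ∧
    c = (⨆ S : 𝒮, Real.sqrt (∑ t, L S t ^ 2)) * (⨆ x : Ω, Real.sqrt (∑ t, R t x ^ 2)) }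

/-- γ₂ of a real matrix. -/
def gamma2M {m n : ℕ} (A : Matrix (Fin m) (Fin n) ℝ) : ℝ :=
  sInf { c : ℝ | ∃ (k : ℕ) (L : Matrix (Fin m) (Fin k) ℝ) (R : Matrix (Fin k) (Fin n) ℝ),
    A = L * R ∧
    c = (⨆ i : Fin m, Real.sqrt (∑ t, L i t ^ 2)) * (⨆ j : Fin n, Real.sqrt (∑ t, R t j ^ 2)) }

/-- Prefix discrepancy of a matrix. -/
def pdiscM {m n : ℕ} (A : Matrix (Fin m) (Fin n) ℝ) : ℝ :=
  ⨅ x : Fin n → Bool, ⨆ j : Fin n, ⨆ r : Fin m,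
    |∑ i ∈ Finset.univ.filter (fun i : Fin n => i ≤ j),
        (if x i then (1 : ℝ) else -1) * A r i|

/-- Prefix discrepancy of a set system on universe Ω with respect to the ordering σ. -/
def pdiscS {α : Type*} (Ω : Set α) (𝒮 : Set (Set α)) (σ : α → ℕ) : ℝ :=
  ⨅ χ : α → Bool, ⨆ j : ℕ, ⨆ S ∈ 𝒮,
    |∑ᶠ x ∈ {y ∈ Ω | y ∈ S ∧ σ y ≤ j}, (if χ x then (1 : ℝ) else -1)|

/-- The maximal arithmetic progression in Ω_N with difference b through a:
the residue class of a mod b intersected with Ω_N. -/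
def MAPN {d : ℕ} (N : Fin d → ℤ) (a b : Fin d → ℤ) : Set (Fin d → ℤ) :=
  { z | ∃ i : ℤ, z = a + i • b } ∩ OmegaN N

/-- The maximal arithmetic progression inside the convex body K with difference b
through a: the residue class of a mod b intersected with the integer points of K. -/
def MAPK {d : ℕ} (K : Set (Fin d → ℝ)) (a b : Fin d → ℤ) : Set (Fin d → ℤ) :=
  { z | ∃ i : ℤ, z = a + i • b } ∩ intPoints K

/-- The lexicographic order on ℤ^d. -/
def lexLe {d : ℕ} (x y : Fin d → ℤ) : Prop :=
  x = y ∨ ∃ i : Fin d, (∀ j : Fin d, j < i → x j = y j) ∧ x i < y i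

end

/-!
Factor the incidence matrix block by block. Put `ℓ = ⌈f(N)²⌉`. Progressions with at most `ℓ`
points are factored through the identity (squared row norms `≤ ℓ`, column norms `1`). A longer
progression with difference `b` contains two points `ℓ` steps apart, so `ℓ |b_j| < N_j` for all
`j`, which leaves at most `3^d f(N)²` differences. For a fixed `b` the maximal progressions
partition `Ω_N`, and a partition factors with all norms `1`; rescaled to squared norms
`(ℓ, 1/ℓ)` and stacked over all admissible `b`, the squared column norms stay below
`1 + 3^d f(N)² / ℓ`. Hence `γ₂ ≤ √(ℓ + 3^d f(N)²) ≤ √(2 + 3^d) f(N)`.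
-/

universe u

section Factorization

variable {α : Type u} {Ω : Set α} {𝒮 𝒯 : Set (Set α)} {a b c : ℝ}

/-- The incidence matrix of `𝒮` (rows `S ∈ 𝒮`, columns `x ∈ Ω`) factors as `L * R` with squared
row norms of `L` at most `a` and squared column norms of `R` at most `b`. -/
def HasFactorization (Ω : Set α) (𝒮 : Set (Set α)) (a b : ℝ) : Prop :=
  ∃ (κ : Type u) (_ : Fintype κ) (L : Set α → κ → ℝ) (R : κ → α → ℝ),
    (∀ S ∈ 𝒮, ∀ x ∈ Ω, ∑ t, L S t * R t x = S.indicator 1 x) ∧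
    (∀ S ∈ 𝒮, ∑ t, L S t ^ 2 ≤ a) ∧ (∀ x ∈ Ω, ∑ t, R t x ^ 2 ≤ b)

theorem gamma2S_le_of_hasFactorization (h : HasFactorization Ω 𝒮 a b) :
    gamma2S Ω 𝒮 ≤ √a * √b := by
  obtain ⟨κ, _, L, R, hLR, hL, hR⟩ := h
  set e := (Fintype.equivFin κ).symm
  have hbdd : BddBelow {c : ℝ | ∃ (k : ℕ) (L : 𝒮 → Fin k → ℝ) (R : Fin k → Ω → ℝ),
      (∀ (S : 𝒮) (x : Ω), (∑ t, L S t * R t x) = (S : Set α).indicator (fun _ => 1) (x : α)) ∧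
      c = (⨆ S : 𝒮, √(∑ t, L S t ^ 2)) * (⨆ x : Ω, √(∑ t, R t x ^ 2))} := by
    refine ⟨0, ?_⟩
    rintro c ⟨k, L, R, -, rfl⟩
    exact mul_nonneg (Real.iSup_nonneg fun _ => Real.sqrt_nonneg _)
      (Real.iSup_nonneg fun _ => Real.sqrt_nonneg _)
  refine (csInf_le hbdd ⟨_, fun S t => L S (e t), fun t x => R (e t) x,
    fun S x => ?_, rfl⟩).trans ?_
  · rw [e.sum_comp (fun t => L S t * R t x)]
    exact hLR S S.2 x x.2
  · refine mul_le_mul (Real.iSup_le (fun S => ?_) (Real.sqrt_nonneg _))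
      (Real.iSup_le (fun x => ?_) (Real.sqrt_nonneg _))
      (Real.iSup_nonneg fun _ => Real.sqrt_nonneg _) (Real.sqrt_nonneg _)
    · rw [e.sum_comp (fun t => L S t ^ 2)]
      exact Real.sqrt_le_sqrt (hL S S.2)
    · rw [e.sum_comp (fun t => R t x ^ 2)]
      exact Real.sqrt_le_sqrt (hR x x.2)

namespace HasFactorization

theorem mono (h : HasFactorization Ω 𝒮 a b) (h𝒯 : 𝒯 ⊆ 𝒮) : HasFactorization Ω 𝒯 a b := by
  obtain ⟨κ, _, L, R, hLR, hL, hR⟩ := h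
  exact ⟨κ, inferInstance, L, R, fun S hS => hLR S (h𝒯 hS), fun S hS => hL S (h𝒯 hS), hR⟩

theorem empty (a : ℝ) : HasFactorization Ω ∅ a 0 :=
  ⟨PEmpty, inferInstance, fun _ => PEmpty.elim, PEmpty.elim, by simp, by simp, by simp⟩

theorem smul (h : HasFactorization Ω 𝒮 a b) (hc : 0 < c) :
    HasFactorization Ω 𝒮 (c * a) (b / c) := by
  obtain ⟨κ, _, L, R, hLR, hL, hR⟩ := h
  have hsc : √c ^ 2 = c := Real.sq_sqrt hc.le
  have hsc0 : √c ≠ 0 := (Real.sqrt_pos.2 hc).ne'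
  refine ⟨κ, inferInstance, fun S t => √c * L S t, fun t x => R t x / √c, fun S hS x hx => ?_,
    fun S hS => ?_, fun x hx => ?_⟩
  · rw [← hLR S hS x hx]
    exact Finset.sum_congr rfl fun t _ => by field_simp
  · simp_rw [mul_pow, hsc, ← Finset.mul_sum]
    exact mul_le_mul_of_nonneg_left (hL S hS) hc.le
  · simp_rw [div_pow, hsc, ← Finset.sum_div]
    exact div_le_div_of_nonneg_right (hR x hx) hc.le

theorem union (h₁ : HasFactorization Ω 𝒮 a b) (h₂ : HasFactorization Ω 𝒯 a c) :
    HasFactorization Ω (𝒮 ∪ 𝒯) a (b + c) := by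
  classical
  obtain ⟨κ₁, _, L₁, R₁, hLR₁, hL₁, hR₁⟩ := h₁
  obtain ⟨κ₂, _, L₂, R₂, hLR₂, hL₂, hR₂⟩ := h₂
  refine ⟨κ₁ ⊕ κ₂, inferInstance,
    fun S => Sum.elim (fun t => if S ∈ 𝒮 then L₁ S t else 0)
      (fun t => if S ∈ 𝒮 then 0 else L₂ S t),
    Sum.elim R₁ R₂, fun S hS x hx => ?_, fun S hS => ?_, fun x hx => ?_⟩
  · by_cases h : S ∈ 𝒮
    · simpa [Fintype.sum_sum_type, h] using hLR₁ S h x hx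
    · simpa [Fintype.sum_sum_type, h] using hLR₂ S (hS.resolve_left h) x hx
  · by_cases h : S ∈ 𝒮
    · simpa [Fintype.sum_sum_type, h] using hL₁ S h
    · simpa [Fintype.sum_sum_type, h] using hL₂ S (hS.resolve_left h)
  · simpa [Fintype.sum_sum_type] using add_le_add (hR₁ x hx) (hR₂ x hx)

theorem biUnion {ι : Type*} {𝒮 : ι → Set (Set α)} {b : ι → ℝ} (s : Finset ι)
    (h : ∀ i ∈ s, HasFactorization Ω (𝒮 i) a (b i)) :
    HasFactorization Ω (⋃ i ∈ s, 𝒮 i) a (∑ i ∈ s, b i) := by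
  classical
  induction s using Finset.induction_on with
  | empty => simpa using empty a
  | insert i s hi ih =>
    rw [Finset.set_biUnion_insert, Finset.sum_insert hi]
    exact (h i (Finset.mem_insert_self i s)).union
      (ih fun j hj => h j (Finset.mem_insert_of_mem hj))

end HasFactorization

theorem sum_ite_mem_eq_ncard_mul [Fintype Ω] (T : Set α) [DecidablePred (· ∈ T)] (c : ℝ) :
    ∑ y : Ω, (if (y : α) ∈ T then c else 0) = (Ω ∩ T).ncard * c := by
  rw [Finset.sum_ite, Finset.sum_const_zero, add_zero, Finset.sum_const, nsmul_eq_mul,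
    ← Set.ncard_coe_finset, ← Subtype.image_preimage_coe,
    Set.ncard_image_of_injective _ Subtype.val_injective]
  congr
  ext
  simp

theorem hasFactorization_ncard_le (hΩ : Ω.Finite) (ℓ : ℕ) :
    HasFactorization Ω {S | (Ω ∩ S).ncard ≤ ℓ} ℓ 1 := by
  classical
  let := hΩ.fintype
  refine ⟨Ω, inferInstance, fun S y => if (y : α) ∈ S then 1 else 0,
    fun y x => if (y : α) = x then 1 else 0, fun S _ x hx => ?_, fun S hS => ?_, fun x hx => ?_⟩
  · rw [Finset.sum_eq_single_of_mem ⟨x, hx⟩ (Finset.mem_univ _) (fun y _ hy => by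
      simp [Subtype.ext_iff.not.1 hy])]
    by_cases hxS : x ∈ S <;> simp [hxS]
  · calc ∑ y : Ω, (if (y : α) ∈ S then (1 : ℝ) else 0) ^ 2 = (Ω ∩ S).ncard := by
          simp_rw [ite_pow, one_pow, zero_pow two_ne_zero, sum_ite_mem_eq_ncard_mul, mul_one]
      _ ≤ ℓ := by exact_mod_cast hS
  · rw [Finset.sum_eq_single_of_mem ⟨x, hx⟩ (Finset.mem_univ _) (fun y _ hy => by
      simp [Subtype.ext_iff.not.1 hy])]
    simp

/-- The rows `𝟙_S / √|S|` and columns `𝟙_{[x]} / √|[x]|` factor the incidence matrix of the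
partition of `Ω` into classes `[x]`. -/
theorem hasFactorization_setoid_classes (hΩ : Ω.Finite) (s : Setoid α) :
    HasFactorization Ω {S | ∃ a, S = Ω ∩ {y | s a y}} 1 1 := by
  classical
  let := hΩ.fintype
  have hnorm (T : Set α) (hT : T ⊆ Ω) :
      ∑ y : Ω, (if (y : α) ∈ T then (√T.ncard)⁻¹ else 0) ^ 2 ≤ 1 := by
    simp_rw [ite_pow, zero_pow two_ne_zero, inv_pow, Real.sq_sqrt (Nat.cast_nonneg _),
      sum_ite_mem_eq_ncard_mul, Set.inter_eq_right.2 hT]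
    exact mul_inv_le_one
  refine ⟨Ω, inferInstance, fun S y => if (y : α) ∈ S then (√S.ncard)⁻¹ else 0,
    fun y x => if (y : α) ∈ Ω ∩ {z | s x z} then (√(Ω ∩ {z | s x z}).ncard)⁻¹ else 0,
    ?_, ?_, fun x _ => by convert hnorm (Ω ∩ {z | s x z}) Set.inter_subset_left⟩
  · rintro S ⟨a, rfl⟩ x hx
    simp_rw [ite_zero_mul_ite_zero, ← Set.mem_inter_iff, sum_ite_mem_eq_ncard_mul]
    by_cases hax : s a x
    · have hclass : Ω ∩ {z | s x z} = Ω ∩ {z | s a z} := by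
        ext z
        exact and_congr_right fun _ => ⟨s.trans hax, s.trans (s.symm hax)⟩
      have hpos : (0 : ℝ) < (Ω ∩ {z | s a z}).ncard := by
        exact_mod_cast (Set.ncard_pos (hΩ.subset Set.inter_subset_left)).2 ⟨x, hx, hax⟩
      rw [hclass, Set.inter_self, Set.inter_eq_right.2 Set.inter_subset_left,
        Set.indicator_of_mem (show x ∈ Ω ∩ {z | s a z} from ⟨hx, hax⟩), ← mul_inv,
        Real.mul_self_sqrt hpos.le, mul_inv_cancel₀ hpos.ne', Pi.one_apply]
    · have hdisj : Ω ∩ ((Ω ∩ {z | s a z}) ∩ (Ω ∩ {z | s x z})) = ∅ :=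
        Set.eq_empty_of_forall_notMem fun _ ⟨_, ⟨_, haz⟩, _, hxz⟩ =>
          hax (s.trans haz (s.symm hxz))
      rw [hdisj, Set.indicator_of_notMem (fun h => hax h.2)]
      simp
  · rintro S ⟨a, rfl⟩
    exact hnorm _ Set.inter_subset_left

end Factorization

theorem Int.exists_le_sub_of_lt_ncard {s : Set ℤ} (hs : s.Finite) {ℓ : ℕ} (h : ℓ < s.ncard) :
    ∃ i ∈ s, ∃ j ∈ s, (ℓ : ℤ) ≤ j - i := by
  set t := hs.toFinset
  have ht : t.Nonempty := by
    rw [← Finset.card_pos, ← Set.ncard_eq_toFinset_card s hs]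
    omega
  refine ⟨t.min' ht, hs.mem_toFinset.1 (t.min'_mem ht), t.max' ht,
    hs.mem_toFinset.1 (t.max'_mem ht), ?_⟩
  have hcard : t.card ≤ (Finset.Icc (t.min' ht) (t.max' ht)).card :=
    Finset.card_le_card fun i hi => Finset.mem_Icc.2 ⟨t.min'_le i hi, t.le_max' i hi⟩
  rw [Int.card_Icc, ← Set.ncard_eq_toFinset_card s hs] at hcard
  omega

section MaximalProgressions

variable {d : ℕ}

theorem OmegaN_finite (N : Fin d → ℤ) : (OmegaN N).Finite :=
  (Set.finite_Icc 1 N).subset fun _ hx => ⟨fun i => (hx i).1, fun i => (hx i).2⟩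

theorem MAPN_subset_OmegaN (N a b : Fin d → ℤ) : MAPN N a b ⊆ OmegaN N :=
  Set.inter_subset_right

theorem MAPN_eq_inter_leftRel (N a b : Fin d → ℤ) :
    MAPN N a b = OmegaN N ∩ {y | QuotientAddGroup.leftRel (AddSubgroup.zmultiples b) a y} := by
  ext y
  simp only [MAPN, QuotientAddGroup.leftRel_apply, AddSubgroup.mem_zmultiples_iff,
    Set.mem_inter_iff, Set.mem_ofPred, eq_neg_add_iff_add_eq, eq_comm (a := y)]
  exact and_comm

theorem hasFactorization_MAPN (N b : Fin d → ℤ) :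
    HasFactorization (OmegaN N) {S | ∃ a, S = MAPN N a b} 1 1 := by
  simpa only [MAPN_eq_inter_leftRel] using
    hasFactorization_setoid_classes (OmegaN_finite N) (QuotientAddGroup.leftRel _)

/-- A progression with more than `ℓ` points in the box has two of them `ℓ` steps apart. -/
theorem mul_abs_le_of_lt_ncard_MAPN {N a b : Fin d → ℤ} {ℓ : ℕ} (h : ℓ < (MAPN N a b).ncard)
    (j : Fin d) : ℓ * |b j| ≤ N j - 1 := by
  obtain ⟨_, -, hx⟩ := Set.nonempty_of_ncard_ne_zero (by omega : (MAPN N a b).ncard ≠ 0)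
  by_cases hbj : b j = 0
  · simp only [hbj, abs_zero, mul_zero, sub_nonneg]
    exact (hx j).1.trans (hx j).2
  set f : ℤ → Fin d → ℤ := fun i => a + i • b
  have hf : Function.Injective f := fun i i' e =>
    mul_right_cancel₀ hbj (by simpa [f] using congrFun e j)
  have hMAPN : MAPN N a b = f '' (f ⁻¹' OmegaN N) := by
    rw [Set.image_preimage_eq_inter_range, Set.inter_comm]
    ext y
    simp only [MAPN, Set.mem_inter_iff, Set.mem_range, Set.mem_ofPred, eq_comm (a := y), f]
  rw [hMAPN, Set.ncard_image_of_injective _ hf] at h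
  obtain ⟨i, hi, i', hi', hii'⟩ :=
    Int.exists_le_sub_of_lt_ncard ((OmegaN_finite N).preimage hf.injOn) h
  have h₁ := hi j
  have h₂ := hi' j
  simp only [f, Pi.add_apply, Pi.smul_apply, smul_eq_mul] at h₁ h₂
  calc (ℓ : ℤ) * |b j| ≤ (i' - i) * |b j| := mul_le_mul_of_nonneg_right hii' (abs_nonneg _)
    _ = |(a j + i' * b j) - (a j + i * b j)| := by
      rw [← abs_of_nonneg (hii'.trans' (Nat.cast_nonneg ℓ)), ← abs_mul]
      ring_nf
    _ ≤ N j - 1 := abs_sub_le_iff.2 ⟨by linarith, by linarith⟩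

end MaximalProgressions

section GridCounting

variable {d : ℕ}

theorem rpow_le_fVec (N : Fin d → ℤ) (I : Finset (Fin d)) :
    (∏ i ∈ I, (N i : ℝ)) ^ ((1 : ℝ) / (2 * (I.card : ℝ) + 2)) ≤ fVec N := by
  unfold fVec
  exact le_ciSup (f := fun I : Finset (Fin d) =>
    (∏ i ∈ I, (N i : ℝ)) ^ ((1 : ℝ) / (2 * (I.card : ℝ) + 2))) (Set.finite_range _).bddAbove I

theorem one_le_fVec (N : Fin d → ℤ) : 1 ≤ fVec N := by
  simpa using rpow_le_fVec N ∅

theorem prod_le_fVec_pow {N : Fin d → ℤ} (hN : ∀ i, 0 ≤ N i) (I : Finset (Fin d)) :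
    ∏ i ∈ I, (N i : ℝ) ≤ fVec N ^ (2 * I.card + 2) := by
  have hP : 0 ≤ ∏ i ∈ I, (N i : ℝ) := Finset.prod_nonneg fun i _ => Int.cast_nonneg (hN i)
  have he : (0 : ℝ) < 2 * I.card + 2 := by positivity
  calc ∏ i ∈ I, (N i : ℝ)
      = ((∏ i ∈ I, (N i : ℝ)) ^ ((1 : ℝ) / (2 * I.card + 2))) ^ ((2 * I.card + 2 : ℕ) : ℝ) := by
        rw [← Real.rpow_mul hP]
        push_cast
        rw [one_div_mul_cancel he.ne', Real.rpow_one]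
    _ ≤ fVec N ^ ((2 * I.card + 2 : ℕ) : ℝ) :=
        Real.rpow_le_rpow (Real.rpow_nonneg hP _) (rpow_le_fVec N I) (Nat.cast_nonneg _)
    _ = fVec N ^ (2 * I.card + 2) := Real.rpow_natCast _ _

/-- Expanding the product, each subset `t` of coordinates contributes
`2^|t| ∏_{j ∈ t} N_j / ℓ^|t| ≤ 2^|t| f(N)²`. -/
theorem prod_two_mul_div_add_one_le {N : Fin d → ℤ} (hN : ∀ i, 0 ≤ N i) {ℓ : ℝ}
    (hℓ : fVec N ^ 2 ≤ ℓ) : ∏ j, (2 * (N j : ℝ) / ℓ + 1) ≤ 3 ^ d * fVec N ^ 2 := by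
  have hℓ0 : 0 < ℓ := (pow_pos (one_pos.trans_le (one_le_fVec N)) 2).trans_le hℓ
  have hterm (t : Finset (Fin d)) : ∏ j ∈ t, (2 * (N j : ℝ) / ℓ) ≤ 2 ^ t.card * fVec N ^ 2 := by
    rw [Finset.prod_div_distrib, Finset.prod_mul_distrib, Finset.prod_const, Finset.prod_const,
      div_le_iff₀ (by positivity), mul_assoc]
    gcongr
    calc ∏ j ∈ t, (N j : ℝ) ≤ fVec N ^ (2 * t.card + 2) := prod_le_fVec_pow hN t
      _ = fVec N ^ 2 * (fVec N ^ 2) ^ t.card := by ring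
      _ ≤ fVec N ^ 2 * ℓ ^ t.card := by gcongr
  calc ∏ j, (2 * (N j : ℝ) / ℓ + 1)
      = ∑ t ∈ Finset.univ.powerset, ∏ j ∈ t, (2 * (N j : ℝ) / ℓ) := by
        simp_rw [add_comm _ (1 : ℝ)]
        exact Finset.prod_one_add _
    _ ≤ ∑ t ∈ (Finset.univ : Finset (Fin d)).powerset, 2 ^ t.card * fVec N ^ 2 :=
        Finset.sum_le_sum fun t _ => hterm t
    _ = 3 ^ d * fVec N ^ 2 := by
        rw [← Finset.sum_mul]
        congr 1
        simpa [show (2 : ℝ) + 1 = 3 by norm_num] using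
          Finset.sum_pow_mul_eq_add_pow (2 : ℝ) 1 (Finset.univ : Finset (Fin d))

noncomputable def diffBox (N : Fin d → ℤ) (ℓ : ℕ) : Finset (Fin d → ℤ) :=
  Fintype.piFinset fun j => Finset.Icc (-((N j - 1) / ℓ)) ((N j - 1) / ℓ)

theorem mem_diffBox {N b : Fin d → ℤ} {ℓ : ℕ} (hℓ : 0 < ℓ) :
    b ∈ diffBox N ℓ ↔ ∀ j, ℓ * |b j| ≤ N j - 1 := by
  simp only [diffBox, Fintype.mem_piFinset, Finset.mem_Icc, ← abs_le]
  simp only [Int.le_ediv_iff_mul_le (Nat.cast_pos.2 hℓ), mul_comm]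

theorem card_diffBox_le {N : Fin d → ℤ} (hN : ∀ i, 1 ≤ N i) {ℓ : ℕ} (hℓ : 0 < ℓ) :
    ((diffBox N ℓ).card : ℝ) ≤ ∏ j, (2 * (N j : ℝ) / ℓ + 1) := by
  rw [diffBox, Fintype.card_piFinset, Nat.cast_prod]
  refine Finset.prod_le_prod (fun _ _ => Nat.cast_nonneg _) fun j _ => ?_
  set m := (N j - 1) / (ℓ : ℤ)
  have hm : m * ℓ ≤ N j - 1 := (Int.le_ediv_iff_mul_le (Nat.cast_pos.2 hℓ)).1 le_rfl
  have hm₀ : 0 ≤ m := Int.ediv_nonneg (by linarith [hN j]) (Nat.cast_nonneg ℓ)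
  have hmR : (m : ℝ) ≤ N j / ℓ := by
    rw [le_div_iff₀ (Nat.cast_pos.2 hℓ)]
    exact_mod_cast hm.trans (sub_le_self _ zero_le_one)
  have hcard : (((m + 1 - -m).toNat : ℤ) : ℝ) = 2 * m + 1 := by
    rw [Int.toNat_of_nonneg (by omega)]
    push_cast
    ring
  rw [Int.card_Icc, ← Int.cast_natCast, hcard, mul_div_assoc]
  linarith

end GridCounting

theorem gamma2S_MAPN_le {d : ℕ} (N : Fin d → ℤ) (hN : ∀ i, 1 ≤ N i) :
    gamma2S (OmegaN N) {S | ∃ a b : Fin d → ℤ, S = MAPN N a b} ≤ √(2 + 3 ^ d) * fVec N := by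
  set F := fVec N
  set ℓ := ⌈F ^ 2⌉₊
  have hF : 1 ≤ F := one_le_fVec N
  have hℓF : F ^ 2 ≤ ℓ := Nat.le_ceil _
  have hℓ2F : (ℓ : ℝ) ≤ 2 * F ^ 2 := by
    nlinarith [Nat.ceil_lt_add_one (sq_nonneg F)]
  have hℓ : 0 < ℓ := Nat.ceil_pos.2 (by positivity)
  have hℓR : (0 : ℝ) < ℓ := Nat.cast_pos.2 hℓ
  have hcover : {S | ∃ a b : Fin d → ℤ, S = MAPN N a b} ⊆
      {S | (OmegaN N ∩ S).ncard ≤ ℓ} ∪ ⋃ b ∈ diffBox N ℓ, {S | ∃ a, S = MAPN N a b} := by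
    rintro _ ⟨a, b, rfl⟩
    by_cases h : (MAPN N a b).ncard ≤ ℓ
    · left
      rwa [Set.mem_ofPred, Set.inter_eq_right.2 (MAPN_subset_OmegaN N a b)]
    · exact Or.inr (Set.mem_biUnion ((mem_diffBox hℓ).2
        (mul_abs_le_of_lt_ncard_MAPN (not_le.1 h))) ⟨a, rfl⟩)
  have hfac := ((hasFactorization_ncard_le (OmegaN_finite N) ℓ).union
    (HasFactorization.biUnion (diffBox N ℓ) fun b _ => by
      simpa only [mul_one] using (hasFactorization_MAPN N b).smul hℓR)).mono hcover
  have hbox : ((diffBox N ℓ).card : ℝ) ≤ 3 ^ d * F ^ 2 :=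
    (card_diffBox_le hN hℓ).trans (prod_two_mul_div_add_one_le (fun i => by linarith [hN i]) hℓF)
  calc gamma2S (OmegaN N) {S | ∃ a b : Fin d → ℤ, S = MAPN N a b}
      ≤ √ℓ * √(1 + ∑ _b ∈ diffBox N ℓ, 1 / (ℓ : ℝ)) := gamma2S_le_of_hasFactorization hfac
    _ = √(ℓ + (diffBox N ℓ).card) := by
      rw [← Real.sqrt_mul hℓR.le, Finset.sum_const, nsmul_eq_mul]
      congr 1
      field_simp
    _ ≤ √((2 + 3 ^ d) * F ^ 2) := Real.sqrt_le_sqrt (by linarith)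
    _ = √(2 + 3 ^ d) * F := by rw [Real.sqrt_mul (by positivity), Real.sqrt_sq (by positivity)]

theorem stmt9_general (d : ℕ) :
    ∃ C : ℝ, ∀ N : Fin d → ℤ, (∀ i, 1 < N i) →
      gamma2S (OmegaN N) {S | ∃ a b : Fin d → ℤ, S = MAPN N a b} ≤ C * fVec N :=
  ⟨√(2 + 3 ^ d), fun N hN => gamma2S_MAPN_le N fun i => (hN i).le⟩

/-- γ₂ of the system of all maximal APs in Ω_N is at most C_d f(N). -/
theorem stmt9 (d : ℕ) (hd : 0 < d) :
    ∃ C : ℝ, ∀ N : Fin d → ℤ, (∀ i, 1 < N i) →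
      gamma2S (OmegaN N) {S | ∃ a b : Fin d → ℤ, S = MAPN N a b} ≤ C * fVec N :=
  stmt9_general d
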